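/- Let k be a positive integer and let D be a digraph containing no subdivision of C(k,1,k,1) that has a Hamiltonian directed cycle C. Let u, v, w, x, x' be five vertices of D such that uv is an edge of the underlying graph G(D) not lying on C, w lies on the open arc C]u,v[ of C, and x, x' lie on the open arc C]v,u[ in such a way that the segment C[v,x] has exactly k vertices and the segment C[x',u] has exactly k vertices. If (v,u) is an arc of D, then w has at most 2 neighbors in G(D) among the vertices of C]x,x'[. -/

import Mathlib

variable {V : Type*}

/-- The underlying simple graph of the digraph with arc relation `A`
(a directed 2-cycle yields a single edge). -/
def underlying (A : V → V → Prop) : SimpleGraph V where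
  Adj x y := x ≠ y ∧ (A x y ∨ A y x)
  symm := ⟨fun x y h => ⟨h.1.symm, h.2.symm⟩⟩
  loopless := ⟨fun x h => h.1 rfl⟩

/-- `p` is the vertex list of a directed path in `A` from `a` to `b`
having at least `k` arcs. -/
def IsDipathFromTo (A : V → V → Prop) (p : List V) (a b : V) (k : ℕ) : Prop :=
  p.Chain' A ∧ p.Nodup ∧ p.head? = some a ∧ p.getLast? = some b ∧ k + 1 ≤ p.length

/-- The digraph `A` contains a subdivision of the four-blocks cycle `C(k1,k2,k3,k4)`:
four distinct vertices `a,b,c,d` and four directed paths `P1 : a → b` of length ≥ `k1`,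
`P2 : c → b` of length ≥ `k2`, `P3 : c → d` of length ≥ `k3`, `P4 : a → d` of length ≥ `k4`,
pairwise meeting only at the shared endpoints. -/
def HasC4Subdivision (A : V → V → Prop) (k1 k2 k3 k4 : ℕ) : Prop :=
  ∃ (a b c d : V) (p1 p2 p3 p4 : List V),
    a ≠ b ∧ a ≠ c ∧ a ≠ d ∧ b ≠ c ∧ b ≠ d ∧ c ≠ d ∧
    IsDipathFromTo A p1 a b k1 ∧
    IsDipathFromTo A p2 c b k2 ∧
    IsDipathFromTo A p3 c d k3 ∧
    IsDipathFromTo A p4 a d k4 ∧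
    (∀ v ∈ p1, v ∈ p2 → v = b) ∧
    (∀ v ∈ p1, v ∉ p3) ∧
    (∀ v ∈ p1, v ∈ p4 → v = a) ∧
    (∀ v ∈ p2, v ∈ p3 → v = c) ∧
    (∀ v ∈ p2, v ∉ p4) ∧
    (∀ v ∈ p3, v ∈ p4 → v = d)


/-!
Number the Hamiltonian cycle from `v`: then `u` sits at some position `U`, `w` beyond `U`, and the
vertices of `C]x,x'[` at the positions `p` with `k - 1 < p` and `p + (k - 1) < U`. If `w` had arcs
to two such positions `p < q`, the arc `w → p`, the cycle path `v → p`, the chord `v → u`, and the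
arc `w → q` followed by the cycle path `q → u` would form a subdivision of `C(k,1,k,1)`; two arcs
from `p` and `q` into `w` give one symmetrically, from `v → p → w`, `q → w`, `q → u` and `v → u`.
So `w` has at most one out-neighbour and one in-neighbour there.

The subdivisions are built on positions in `ℕ`, where disjointness of the paths is linear
arithmetic, and transported to `D` along the map `c ↦ e (iv + c)`, injective on `[0, n)`.
-/

section

variable {α : Type*}

def comapOn (A : V → V → Prop) (f : α → V) (s : Set α) (x y : α) : Prop :=
  x ∈ s ∧ y ∈ s ∧ A (f x) (f y)

section Transport

variable {A : V → V → Prop} {f : α → V} {s : Set α}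

theorem IsDipathFromTo.forall_mem_of_ne {p : List α} {a b : α} {k : ℕ}
    (h : IsDipathFromTo (comapOn A f s) p a b k) (hab : a ≠ b) : ∀ x ∈ p, x ∈ s := by
  obtain ⟨hchain, -, hhead, hlast, -⟩ := h
  match p, hchain, hhead, hlast with
  | [x], _, hhead, hlast => simp_all
  | x :: y :: t, hchain, _, _ =>
    exact hchain.induction (· ∈ s) _ (fun _ _ hxy _ => hxy.2.1)
      fun _ => (List.isChain_cons_cons.mp hchain).1.1

theorem IsDipathFromTo.map_of_injOn (hf : s.InjOn f) {p : List α} {a b : α} {k : ℕ}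
    (h : IsDipathFromTo (comapOn A f s) p a b k) (hab : a ≠ b) :
    IsDipathFromTo A (p.map f) (f a) (f b) k := by
  have hs := h.forall_mem_of_ne hab
  obtain ⟨hchain, hnodup, hhead, hlast, hlen⟩ := h
  refine ⟨?_, ?_, by simp [hhead], by simp [List.getLast?_map, hlast], by simpa using hlen⟩
  · exact (List.isChain_map f).mpr (hchain.imp fun _ _ hxy => hxy.2.2)
  · exact hnodup.map_on fun x hx y hy hxy => hf (hs x hx) (hs y hy) hxy

theorem List.eq_of_mem_map_inter_of_injOn (hf : s.InjOn f) {p q : List α} (hp : ∀ x ∈ p, x ∈ s)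
    (hq : ∀ x ∈ q, x ∈ s) {b : α} (h : ∀ x ∈ p, x ∈ q → x = b) :
    ∀ y ∈ p.map f, y ∈ q.map f → y = f b := by
  simp only [List.mem_map]
  rintro _ ⟨x, hx, rfl⟩ ⟨x', hx', hxx'⟩
  rw [h x hx (hf (hq x' hx') (hp x hx) hxx' ▸ hx')]

theorem List.map_disjoint_of_injOn (hf : s.InjOn f) {p q : List α} (hp : ∀ x ∈ p, x ∈ s)
    (hq : ∀ x ∈ q, x ∈ s) (h : ∀ x ∈ p, x ∉ q) : ∀ y ∈ p.map f, y ∉ q.map f := by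
  simp only [List.mem_map, not_exists, not_and]
  rintro _ ⟨x, hx, rfl⟩ x' hx' hxx'
  exact h x hx (hf (hq x' hx') (hp x hx) hxx' ▸ hx')

theorem HasC4Subdivision.of_comapOn (hf : s.InjOn f) {k₁ k₂ k₃ k₄ : ℕ}
    (h : HasC4Subdivision (comapOn A f s) k₁ k₂ k₃ k₄) : HasC4Subdivision A k₁ k₂ k₃ k₄ := by
  obtain ⟨a, b, c, d, p₁, p₂, p₃, p₄, hab, hac, had, hbc, hbd, hcd, h₁, h₂, h₃, h₄,
    h₁₂, h₁₃, h₁₄, h₂₃, h₂₄, h₃₄⟩ := h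
  have hs₁ := h₁.forall_mem_of_ne hab
  have hs₂ := h₂.forall_mem_of_ne hbc.symm
  have hs₃ := h₃.forall_mem_of_ne hcd
  have hs₄ := h₄.forall_mem_of_ne had
  have ha : a ∈ s := hs₁ a (List.mem_of_mem_head? h₁.2.2.1)
  have hb : b ∈ s := hs₂ b (List.mem_of_mem_getLast? h₂.2.2.2.1)
  have hc : c ∈ s := hs₃ c (List.mem_of_mem_head? h₃.2.2.1)
  have hd : d ∈ s := hs₄ d (List.mem_of_mem_getLast? h₄.2.2.2.1)
  exact ⟨f a, f b, f c, f d, p₁.map f, p₂.map f, p₃.map f, p₄.map f,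
    hf.ne ha hb hab, hf.ne ha hc hac, hf.ne ha hd had, hf.ne hb hc hbc, hf.ne hb hd hbd,
    hf.ne hc hd hcd, h₁.map_of_injOn hf hab, h₂.map_of_injOn hf hbc.symm,
    h₃.map_of_injOn hf hcd, h₄.map_of_injOn hf had,
    List.eq_of_mem_map_inter_of_injOn hf hs₁ hs₂ h₁₂,
    List.map_disjoint_of_injOn hf hs₁ hs₃ h₁₃,
    List.eq_of_mem_map_inter_of_injOn hf hs₁ hs₄ h₁₄,
    List.eq_of_mem_map_inter_of_injOn hf hs₂ hs₃ h₂₃,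
    List.map_disjoint_of_injOn hf hs₂ hs₄ h₂₄,
    List.eq_of_mem_map_inter_of_injOn hf hs₃ hs₄ h₃₄⟩

end Transport

section Dipaths

variable {R : α → α → Prop}

theorem isDipathFromTo_pair {a b : α} (h : R a b) (hab : a ≠ b) :
    IsDipathFromTo R [a, b] a b 1 :=
  ⟨List.isChain_pair.mpr h, by simp [hab], rfl, rfl, le_rfl⟩

theorem IsDipathFromTo.cons {p : List α} {a b x : α} {k : ℕ} (h : IsDipathFromTo R p a b k)
    (hx : R x a) (hxp : x ∉ p) : IsDipathFromTo R (x :: p) x b k := by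
  obtain ⟨hchain, hnodup, hhead, hlast, hlen⟩ := h
  cases p with
  | nil => simp at hhead
  | cons a' p =>
    obtain rfl : a' = a := by simpa using hhead
    exact ⟨hchain.cons_cons hx, List.nodup_cons.mpr ⟨hxp, hnodup⟩, rfl,
      by simpa [List.getLast?_cons] using hlast, by simp at hlen ⊢; omega⟩

theorem IsDipathFromTo.concat {p : List α} {a b y : α} {k : ℕ} (h : IsDipathFromTo R p a b k)
    (hy : R b y) (hyp : y ∉ p) : IsDipathFromTo R (p ++ [y]) a y k := by
  obtain ⟨hchain, hnodup, hhead, hlast, hlen⟩ := h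
  refine ⟨List.isChain_append.mpr ⟨hchain, List.isChain_singleton y, ?_⟩, ?_, ?_,
    List.getLast?_concat, by simp; omega⟩
  · simp [hlast, hy]
  · simp only [List.nodup_append, List.nodup_singleton, List.mem_singleton]
    exact ⟨hnodup, trivial, fun x hx _ hz hxz => hyp (hz ▸ hxz ▸ hx)⟩
  · cases p with
    | nil => simp at hhead
    | cons => simpa using hhead

end Dipaths

theorem isDipathFromTo_range' {R : ℕ → ℕ → Prop} {a b k : ℕ}
    (hstep : ∀ c, a ≤ c → c < b → R c (c + 1)) (hab : a ≤ b) (hk : k ≤ b - a) :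
    IsDipathFromTo R (List.range' a (b + 1 - a)) a b k := by
  refine ⟨(List.isChain_range' a _ 1).imp_of_mem_imp fun c d hc hd hcd => ?_,
    List.nodup_range', by simp [List.head?_range']; omega,
    by simp [List.getLast?_range']; omega, by simp; omega⟩
  simp only [List.mem_range'_1] at hc hd
  exact hcd ▸ hstep c hc.1 (by omega)

section Chord

variable {R : ℕ → ℕ → Prop} {k p q U W : ℕ}

theorem hasC4Subdivision_of_arcs_from (hstep : ∀ c < U, R c (c + 1)) (hchord : R 0 U)
    (hp : k - 1 < p) (hpq : p < q) (hq : q + (k - 1) < U) (hUW : U < W)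
    (hWp : R W p) (hWq : R W q) : HasC4Subdivision R k 1 k 1 := by
  refine ⟨W, U, 0, p, W :: List.range' q (U + 1 - q), [0, U], List.range' 0 (p + 1), [W, p],
    by omega, by omega, by omega, by omega, by omega, by omega,
    (isDipathFromTo_range' (fun c _ hc => hstep c hc) (by omega) (by omega)).cons hWq
      (by simp; omega),
    isDipathFromTo_pair hchord (by omega),
    isDipathFromTo_range' (fun c _ hc => hstep c (by omega)) (by omega) (by omega),
    isDipathFromTo_pair hWp (by omega), ?_, ?_, ?_, ?_, ?_, ?_⟩ <;>
  · intro c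
    simp only [List.mem_cons, List.mem_range'_1, List.not_mem_nil, or_false]
    omega

theorem hasC4Subdivision_of_arcs_to (hstep : ∀ c < U, R c (c + 1)) (hchord : R 0 U)
    (hp : k - 1 < p) (hpq : p < q) (hq : q + (k - 1) < U) (hUW : U < W)
    (hpW : R p W) (hqW : R q W) : HasC4Subdivision R k 1 k 1 := by
  refine ⟨0, W, q, U, List.range' 0 (p + 1) ++ [W], [q, W], List.range' q (U + 1 - q), [0, U],
    by omega, by omega, by omega, by omega, by omega, by omega,
    (isDipathFromTo_range' (fun c _ hc => hstep c (by omega)) (by omega) (by omega)).concat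
      hpW (by simp; omega),
    isDipathFromTo_pair hqW (by omega),
    isDipathFromTo_range' (fun c _ hc => hstep c hc) (by omega) (by omega),
    isDipathFromTo_pair hchord (by omega), ?_, ?_, ?_, ?_, ?_, ?_⟩ <;>
  · intro c
    simp only [List.mem_append, List.mem_cons, List.mem_range'_1, List.not_mem_nil, or_false]
    omega

theorem subsingleton_arcs_from (hno : ¬ HasC4Subdivision R k 1 k 1)
    (hstep : ∀ c < U, R c (c + 1)) (hchord : R 0 U) (hUW : U < W) :
    {p | k - 1 < p ∧ p + (k - 1) < U ∧ R W p}.Subsingleton := by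
  rintro p ⟨hp, hpU, hWp⟩ q ⟨hq, hqU, hWq⟩
  rcases lt_trichotomy p q with hpq | rfl | hqp
  · exact (hno (hasC4Subdivision_of_arcs_from hstep hchord hp hpq hqU hUW hWp hWq)).elim
  · rfl
  · exact (hno (hasC4Subdivision_of_arcs_from hstep hchord hq hqp hpU hUW hWq hWp)).elim

theorem subsingleton_arcs_to (hno : ¬ HasC4Subdivision R k 1 k 1)
    (hstep : ∀ c < U, R c (c + 1)) (hchord : R 0 U) (hUW : U < W) :
    {p | k - 1 < p ∧ p + (k - 1) < U ∧ R p W}.Subsingleton := by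
  rintro p ⟨hp, hpU, hpW⟩ q ⟨hq, hqU, hqW⟩
  rcases lt_trichotomy p q with hpq | rfl | hqp
  · exact (hno (hasC4Subdivision_of_arcs_to hstep hchord hp hpq hqU hUW hpW hqW)).elim
  · rfl
  · exact (hno (hasC4Subdivision_of_arcs_to hstep hchord hq hqp hpU hUW hqW hpW)).elim

end Chord

theorem Set.ncard_le_two_of_subset_union {s t₁ t₂ : Set α} (h : s ⊆ t₁ ∪ t₂)
    (h₁ : t₁.Subsingleton) (h₂ : t₂.Subsingleton) : s.ncard ≤ 2 :=
  calc s.ncard ≤ (t₁ ∪ t₂).ncard := Set.ncard_le_ncard h (h₁.finite.union h₂.finite)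
    _ ≤ t₁.ncard + t₂.ncard := Set.ncard_union_le t₁ t₂
    _ ≤ 1 + 1 := add_le_add ((Set.ncard_le_one h₁.finite).mpr h₁)
      ((Set.ncard_le_one h₂.finite).mpr h₂)

theorem Equiv.injOn_add_natCast {n : ℕ} (e : ZMod n ≃ V) (i : ZMod n) :
    (Set.Iio n).InjOn fun c : ℕ => e (i + c) := by
  intro c hc d hd hcd
  have := congrArg ZMod.val (add_left_cancel (e.injective hcd))
  rwa [ZMod.val_natCast_of_lt hc, ZMod.val_natCast_of_lt hd] at this

section Cycle

variable {n : ℕ} [NeZero n]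

theorem ZMod.val_sub_natCast_sub_add_natCast {a b : ZMod n} {K : ℕ} (h : 2 * K ≤ (a - b).val) :
    ((a - K) - (b + K)).val = (a - b).val - 2 * K := by
  have hK : ((2 * K : ℕ) : ZMod n).val = 2 * K :=
    ZMod.val_natCast_of_lt (h.trans_lt (ZMod.val_lt _))
  have hab : (a - K) - (b + K) = (a - b) - ((2 * K : ℕ) : ZMod n) := by push_cast; ring
  rw [hab, ZMod.val_sub (hK.symm ▸ h), hK]

theorem ZMod.val_sub_le_sub_val_sub (a b : ZMod n) : (b - a).val ≤ n - (a - b).val := by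
  rw [← neg_sub, ZMod.neg_val]
  split_ifs <;> omega

end Cycle

end

theorem neighbors_in_open_arc_le_two_general
    {V : Type*} (A : V → V → Prop)
    (k : ℕ)
    (hno : ¬ HasC4Subdivision A k 1 k 1)
    (n : ℕ) (hn : 2 ≤ n) (e : ZMod n ≃ V)
    (hC : ∀ i : ZMod n, A (e i) (e (i + 1)))
    (u v w : V) (iu iv : ZMod n)
    (hu : u = e iu) (hv : v = e iv)
    (hw : ∃ j : ℕ, 0 < j ∧ j < (iv - iu).val ∧ w = e (iu + (j : ZMod n)))
    (horder : 2 * (k - 1) ≤ (iu - iv).val)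
    (hvu : A v u) :
    {y : V | (underlying A).Adj w y ∧
        ∃ m : ℕ, 0 < m ∧
          m < ((iu - ((k - 1 : ℕ) : ZMod n)) - (iv + ((k - 1 : ℕ) : ZMod n))).val ∧
          y = e (iv + ((k - 1 : ℕ) : ZMod n) + (m : ZMod n))}.ncard ≤ 2 := by
  have : NeZero n := ⟨by omega⟩
  obtain ⟨j, hj, hjn, rfl⟩ := hw
  set U := (iu - iv).val
  set f : ℕ → V := fun c => e (iv + c)
  set R := comapOn A f (Set.Iio n)
  have hiu : iu = iv + U := by simp [U]
  have hUj : U + j < n := by have := ZMod.val_sub_le_sub_val_sub iu iv; omega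
  have hnoR : ¬ HasC4Subdivision R k 1 k 1 :=
    fun h => hno (h.of_comapOn (e.injOn_add_natCast iv))
  have hstep : ∀ c < U, R c (c + 1) := fun c hc =>
    ⟨by simp; omega, by simp; omega, by simpa [f, add_assoc] using hC (iv + c)⟩
  have hchord : R 0 U := ⟨by simp; omega, by simp; omega, by simpa [f, ← hiu, ← hu, ← hv]⟩
  refine Set.ncard_le_two_of_subset_union ?_
    ((subsingleton_arcs_from hnoR hstep hchord (W := U + j) (by omega)).image f)
    ((subsingleton_arcs_to hnoR hstep hchord (W := U + j) (by omega)).image f)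
  rintro _ ⟨⟨-, hadj⟩, m, hm, hmU, rfl⟩
  rw [ZMod.val_sub_natCast_sub_add_natCast horder] at hmU
  have hw : e (iu + j) = f (U + j) := by simp [f, hiu, add_assoc]
  have hy : e (iv + (k - 1 : ℕ) + m) = f (k - 1 + m) := by simp [f, add_assoc]
  rw [hw] at hadj
  rw [hy] at hadj ⊢
  rcases hadj with h | h
  · exact Or.inl ⟨k - 1 + m, ⟨by omega, by omega, by simp; omega, by simp; omega, h⟩, rfl⟩
  · exact Or.inr ⟨k - 1 + m, ⟨by omega, by omega, by simp; omega, by simp; omega, h⟩, rfl⟩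

/-- Let `D` be a `C(k,1,k,1)`-subdivision-free digraph with a Hamiltonian directed
cycle `C` (encoded by the bijection `e : ZMod n ≃ V` with consecutive arcs).
Let `u, v, w, x, x'` be vertices such that `uv ∈ E(G(D)) \ E(C)`, `w ∈ C]u,v[`,
and `x, x' ∈ C]v,u[` with `C[v,x]` and `C[x',u]` having exactly `k` vertices each.
If `(v,u)` is an arc of `D`, then `w` has at most `2` neighbors in `G(D)`
among the vertices of `C]x,x'[`. -/
theorem neighbors_in_open_arc_le_two
    {V : Type*} [Fintype V] (A : V → V → Prop) (hirr : ∀ v : V, ¬ A v v)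
    (k : ℕ) (hk : 0 < k)
    (hno : ¬ HasC4Subdivision A k 1 k 1)
    (n : ℕ) (hn : 2 ≤ n) (e : ZMod n ≃ V)
    (hC : ∀ i : ZMod n, A (e i) (e (i + 1)))
    (u v w x x' : V) (iu iv : ZMod n)
    (hu : u = e iu) (hv : v = e iv)
    (hedge : (underlying A).Adj u v)
    (hnotC : iv ≠ iu + 1 ∧ iu ≠ iv + 1)
    (hw : ∃ j : ℕ, 0 < j ∧ j < (iv - iu).val ∧ w = e (iu + (j : ZMod n)))
    (hx : x = e (iv + ((k - 1 : ℕ) : ZMod n)))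
    (hx' : x' = e (iu - ((k - 1 : ℕ) : ZMod n)))
    (hxin : 0 < k - 1 ∧ k - 1 < (iu - iv).val)
    (horder : 2 * (k - 1) ≤ (iu - iv).val)
    (hvu : A v u) :
    {y : V | (underlying A).Adj w y ∧
        ∃ m : ℕ, 0 < m ∧
          m < ((iu - ((k - 1 : ℕ) : ZMod n)) - (iv + ((k - 1 : ℕ) : ZMod n))).val ∧
          y = e (iv + ((k - 1 : ℕ) : ZMod n) + (m : ZMod n))}.ncard ≤ 2 :=
  neighbors_in_open_arc_le_two_general A k hno n hn e hC u v w iu iv hu hv hw horder hvu
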